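/- For all integers k ≥ 1 and n ≥ 1, the last-return decomposition gives m(n,k) = ∑_{j=0}^{n−1} m(j)·m(n−1−j, k−1). -/

import Mathlib

/-- Steps of a Motzkin path: up, down, flat. -/
inductive Step : Type
  | U : Step
  | D : Step
  | F : Step
  deriving DecidableEq

instance instFintypeStep : Fintype Step :=
  ⟨{Step.U, Step.D, Step.F}, fun x => by cases x <;> simp⟩

/-- The value (vertical displacement) of a step. -/
def Step.val : Step → ℤ
  | .U => 1
  | .D => -1
  | .F => 0

/-- The partial sum of the first `i` step values of the word `w`. -/
def psum {n : ℕ} (w : Fin n → Step) (i : ℕ) : ℤ :=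
  ∑ j : Fin n, if (j : ℕ) < i then (w j).val else 0

/-- A word is peakless if no up-step is immediately followed by a down-step. -/
def Peakless {n : ℕ} (w : Fin n → Step) : Prop :=
  ∀ i : ℕ, ∀ h : i + 1 < n,
    ¬(w ⟨i, Nat.lt_of_succ_lt h⟩ = Step.U ∧ w ⟨i + 1, h⟩ = Step.D)

/-- `w` is a peakless Motzkin path from level `0` to level `k`:
all partial sums are nonnegative, the total sum is `k`, and there is no peak. -/
def IsPeaklessMotzkinTo {n : ℕ} (w : Fin n → Step) (k : ℤ) : Prop :=
  (∀ i : ℕ, 0 ≤ psum w i) ∧ psum w n = k ∧ Peakless w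

/-- The height of a path: the maximum of its partial sums (0 for the empty path). -/
def height {n : ℕ} (w : Fin n → Step) : ℤ :=
  (Finset.range (n + 1)).sup' Finset.nonempty_range_add_one (psum w)

/-- `mTo n k`: the number of peakless Motzkin paths of length `n` from level `0` to level `k`. -/
noncomputable def mTo (n : ℕ) (k : ℤ) : ℕ :=
  Nat.card {w : Fin n → Step // IsPeaklessMotzkinTo w k}

/-- `m n`: the number of peakless Motzkin paths of length `n`. -/
noncomputable def m (n : ℕ) : ℕ := mTo n 0

/-- `A n ℓ`: the number of peakless Motzkin paths of length `n` of height at most `ℓ`. -/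
noncomputable def A (n ℓ : ℕ) : ℕ :=
  Nat.card {w : Fin n → Step // IsPeaklessMotzkinTo w 0 ∧ height w ≤ (ℓ : ℤ)}

/-
A path `w` of length `n` ending at level `k ≥ 1` has a last visit `j < n` to level `0`; from
there it takes an up-step and stays at level `≥ 1`. Cutting `w` at that step writes it uniquely
as `u U v`, with `u` a path of length `j` to level `0` and `v`, read one level lower, a path of
length `n - 1 - j` to level `k - 1`. Conversely every such `u U v` is a path to level `k` whose
last return is at `j`, and the junction creates no peak because `v` cannot begin with a
down-step.
-/

section words

variable {n : ℕ}

lemma psum_zero (w : Fin n → Step) : psum w 0 = 0 := by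
  simp [psum]

lemma psum_of_le (w : Fin n → Step) {i : ℕ} (hi : n ≤ i) : psum w i = psum w n :=
  Finset.sum_congr rfl fun j _ => by rw [if_pos (by omega), if_pos j.isLt]

lemma psum_succ (w : Fin n → Step) (i : ℕ) :
    psum w (i + 1) = psum w i + if h : i < n then (w ⟨i, h⟩).val else 0 := by
  split_ifs with h
  · have : psum w (i + 1) = psum w i + ∑ j : Fin n, if j = ⟨i, h⟩ then (w j).val else 0 := by
      simp only [psum, ← Finset.sum_add_distrib]
      refine Finset.sum_congr rfl fun j _ => ?_
      simp only [Fin.ext_iff]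
      split_ifs <;> omega
    simpa using this
  · rw [psum_of_le w (i := i + 1) (by omega), psum_of_le w (i := i) (by omega), add_zero]

lemma psum_add_two_of_peak (w : Fin n → Step) {i : ℕ} (hi : i + 1 < n)
    (hU : w ⟨i, by omega⟩ = .U) (hD : w ⟨i + 1, hi⟩ = .D) : psum w (i + 2) = psum w i := by
  rw [psum_succ, psum_succ, dif_pos (by omega), dif_pos hi, hU, hD]
  simp [Step.val]

def slice (w : Fin n → Step) (c a : ℕ) (h : c + a ≤ n) : Fin a → Step :=
  fun t => w ⟨c + t, by omega⟩

lemma psum_slice (w : Fin n → Step) {c a : ℕ} (h : c + a ≤ n) {i : ℕ} (hi : i ≤ a) :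
    psum (slice w c a h) i = psum w (c + i) - psum w c := by
  induction i with
  | zero => simp [psum_zero]
  | succ i ih =>
    rw [psum_succ, ih (by omega), ← add_assoc, psum_succ w (c + i), dif_pos (by omega),
      dif_pos (by omega)]
    simp only [slice]
    ring

lemma psum_eq_psum_min (w : Fin n → Step) (i : ℕ) : psum w i = psum w (min i n) := by
  rcases le_total i n with h | h
  · rw [min_eq_left h]
  · rw [min_eq_right h, psum_of_le w h]

lemma peakless_slice {w : Fin n → Step} (hw : Peakless w) (c a : ℕ) (h : c + a ≤ n) :
    Peakless (slice w c a h) :=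
  fun i hi => hw (c + i) (by omega)

lemma not_peak_of_peakless_slice {w : Fin n → Step} {c a : ℕ} {h : c + a ≤ n}
    (hw : Peakless (slice w c a h)) {i : ℕ} (hci : c ≤ i) (hia : i + 1 < c + a) (hi : i + 1 < n) :
    ¬(w ⟨i, by omega⟩ = .U ∧ w ⟨i + 1, hi⟩ = .D) := by
  obtain ⟨t, rfl⟩ := Nat.exists_eq_add_of_le hci
  exact hw t (by omega)

lemma isPeaklessMotzkinTo_slice {w : Fin n → Step} {k : ℤ}
    (hw : IsPeaklessMotzkinTo w k) {c a : ℕ} (h : c + a ≤ n)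
    (hc : ∀ i, c ≤ i → psum w c ≤ psum w i) {ℓ : ℤ} (hℓ : psum w (c + a) - psum w c = ℓ) :
    IsPeaklessMotzkinTo (slice w c a h) ℓ := by
  refine ⟨fun i => ?_, hℓ ▸ psum_slice w h le_rfl, peakless_slice hw.2.2 c a h⟩
  rw [psum_eq_psum_min, psum_slice w h (min_le_right i a), sub_nonneg]
  exact hc _ (by omega)

end words

def IsLastReturn (f : ℕ → ℤ) (j : ℕ) : Prop :=
  f j = 0 ∧ ∀ i, j < i → 0 < f i

lemma IsLastReturn.unique {f : ℕ → ℤ} {j₁ j₂ : ℕ} (h₁ : IsLastReturn f j₁)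
    (h₂ : IsLastReturn f j₂) : j₁ = j₂ := by
  by_contra hne
  rcases Nat.lt_or_gt_of_ne hne with h | h
  · exact (h₁.2 j₂ h).ne' h₂.1
  · exact (h₂.2 j₁ h).ne' h₁.1

/-- The word `u U v` of length `n`. -/
def glue {n j : ℕ} (u : Fin j → Step) (v : Fin (n - 1 - j) → Step) : Fin n → Step :=
  fun i => if h : (i : ℕ) < j then u ⟨i, h⟩
    else if h' : (i : ℕ) = j then .U
    else v ⟨i - j - 1, by omega⟩

section glue

variable {n j : ℕ} (u : Fin j → Step) (v : Fin (n - 1 - j) → Step)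

lemma glue_self (hj : j < n) : glue u v ⟨j, hj⟩ = .U := by
  simp [glue]

lemma slice_glue_left (h : 0 + j ≤ n) : slice (glue u v) 0 j h = u := by
  funext t
  simp [slice, glue]

lemma slice_glue_right (h : j + 1 + (n - 1 - j) ≤ n) :
    slice (glue u v) (j + 1) (n - 1 - j) h = v := by
  funext t
  simp only [slice, glue]
  rw [dif_neg (by omega), dif_neg (by omega)]
  congr 2
  omega

lemma psum_glue_of_le (hj : j < n) {i : ℕ} (hi : i ≤ j) : psum (glue u v) i = psum u i := by
  have h := psum_slice (glue u v) (c := 0) (by omega) hi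
  rwa [slice_glue_left, psum_zero, zero_add, sub_zero, eq_comm] at h

lemma psum_glue_add (hj : j < n) {i : ℕ} (hi : i ≤ n - 1 - j) :
    psum (glue u v) (j + 1 + i) = psum u j + 1 + psum v i := by
  have h := psum_slice (glue u v) (c := j + 1) (by omega) hi
  rw [slice_glue_right, psum_succ, dif_pos hj, glue_self u v hj,
    psum_glue_of_le u v hj le_rfl] at h
  rw [h]
  simp [Step.val]

variable {u v}

lemma isLastReturn_psum_glue (hj : j < n) (hu : IsPeaklessMotzkinTo u 0)
    (hv : ∀ i, 0 ≤ psum v i) : IsLastReturn (psum (glue u v)) j := by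
  refine ⟨by rw [psum_glue_of_le u v hj le_rfl, hu.2.1], fun i hi => ?_⟩
  obtain ⟨t, ht⟩ : ∃ t, min i n = j + 1 + t := ⟨min i n - j - 1, by omega⟩
  rw [psum_eq_psum_min, ht, psum_glue_add u v hj (by omega), hu.2.1]
  linarith [hv t]

lemma isPeaklessMotzkinTo_glue (hj : j < n) {k : ℤ} (hu : IsPeaklessMotzkinTo u 0)
    (hv : IsPeaklessMotzkinTo v (k - 1)) : IsPeaklessMotzkinTo (glue u v) k := by
  have hret := isLastReturn_psum_glue hj hu hv.1
  refine ⟨fun i => ?_, ?_, ?_⟩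
  · rcases le_or_gt i j with h | h
    · rw [psum_glue_of_le u v hj h]
      exact hu.1 i
    · exact (hret.2 i h).le
  · have h := psum_glue_add u v hj le_rfl
    rw [show j + 1 + (n - 1 - j) = n by omega, hu.2.1, hv.2.1] at h
    rw [h]
    ring
  · rintro i hi ⟨hU, hD⟩
    rcases lt_trichotomy (i + 1) j with h | h | h
    · refine not_peak_of_peakless_slice (c := 0) (a := j) (h := by omega) ?_ (Nat.zero_le i)
        (by omega) hi ⟨hU, hD⟩
      rw [slice_glue_left]
      exact hu.2.2
    · simp [glue, h] at hD
    rcases eq_or_lt_of_le (Nat.lt_succ_iff.1 h) with rfl | h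
    · -- a peak right after the last return would bring the path back to level `0`
      have := hret.2 (j + 2) (by omega)
      rw [psum_add_two_of_peak _ hi hU hD, hret.1] at this
      exact this.false
    · refine not_peak_of_peakless_slice (c := j + 1) (a := n - 1 - j) (h := by omega) ?_ h
        (by omega) hi ⟨hU, hD⟩
      rw [slice_glue_right]
      exact hv.2.2

end glue

section lastReturn

variable {n j : ℕ} {w : Fin n → Step} {k : ℤ}

lemma exists_isLastReturn (hk : 1 ≤ k) (hw : IsPeaklessMotzkinTo w k) :
    ∃ j < n, IsLastReturn (psum w) j := by
  classical
  have hn : 0 < n := Nat.pos_of_ne_zero fun h => by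
    subst h
    have := hw.2.1
    rw [psum_zero] at this
    omega
  set zeros := (Finset.range n).filter (fun i => psum w i = 0)
  have hzeros : zeros.Nonempty := ⟨0, by simp [zeros, hn, psum_zero]⟩
  obtain ⟨hj, hj0⟩ := Finset.mem_filter.1 (zeros.max'_mem hzeros)
  refine ⟨_, Finset.mem_range.1 hj, hj0, fun i hi => ?_⟩
  rcases lt_or_ge i n with hin | hin
  · have hi0 : psum w i ≠ 0 := fun h0 =>
      (zeros.le_max' i (Finset.mem_filter.2 ⟨Finset.mem_range.2 hin, h0⟩)).not_gt hi
    exact lt_of_le_of_ne (hw.1 i) hi0.symm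
  · rw [psum_of_le w hin, hw.2.1]
    omega

lemma IsLastReturn.step_eq_U (h : IsLastReturn (psum w) j) (hj : j < n) : w ⟨j, hj⟩ = .U := by
  have := h.2 (j + 1) (by omega)
  rw [psum_succ, dif_pos hj, h.1, zero_add] at this
  revert this
  cases w ⟨j, hj⟩ <;> simp [Step.val]

lemma glue_slice (hj : j < n) (hU : w ⟨j, hj⟩ = .U) :
    glue (slice w 0 j (by omega)) (slice w (j + 1) (n - 1 - j) (by omega)) = w := by
  funext ⟨i, hi⟩
  simp only [glue, slice]
  split_ifs with h h'
  · simp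
  · simp [h', hU]
  · congr 1
    ext
    simp only
    omega

lemma IsLastReturn.isPeaklessMotzkinTo_prefix (hw : IsPeaklessMotzkinTo w k)
    (h : IsLastReturn (psum w) j) (hj : j < n) : IsPeaklessMotzkinTo (slice w 0 j (by omega)) 0 :=
  isPeaklessMotzkinTo_slice hw _ (fun i _ => psum_zero w ▸ hw.1 i) (by simp [h.1, psum_zero])

lemma IsLastReturn.isPeaklessMotzkinTo_suffix (hw : IsPeaklessMotzkinTo w k)
    (h : IsLastReturn (psum w) j) (hj : j < n) :
    IsPeaklessMotzkinTo (slice w (j + 1) (n - 1 - j) (by omega)) (k - 1) := by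
  have hstep : psum w (j + 1) = 1 := by
    rw [psum_succ, dif_pos hj, h.1, h.step_eq_U hj]
    rfl
  refine isPeaklessMotzkinTo_slice hw _ (fun i hi => hstep ▸ h.2 i (by omega)) ?_
  rw [show j + 1 + (n - 1 - j) = n by omega, hw.2.1, hstep]

end lastReturn

noncomputable def lastReturnEquiv (n : ℕ) {k : ℤ} (hk : 1 ≤ k) :
    (Σ j : Fin n, {u : Fin j → Step // IsPeaklessMotzkinTo u 0} ×
      {v : Fin (n - 1 - j) → Step // IsPeaklessMotzkinTo v (k - 1)}) ≃
    {w : Fin n → Step // IsPeaklessMotzkinTo w k} :=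
  Equiv.ofBijective
    (fun x => ⟨glue x.2.1.1 x.2.2.1, isPeaklessMotzkinTo_glue x.1.isLt x.2.1.2 x.2.2.2⟩) <| by
    constructor
    · rintro ⟨j₁, ⟨u₁, hu₁⟩, ⟨v₁, hv₁⟩⟩ ⟨j₂, ⟨u₂, hu₂⟩, ⟨v₂, hv₂⟩⟩ h
      have hw : glue u₁ v₁ = glue u₂ v₂ := congrArg Subtype.val h
      obtain rfl : j₁ = j₂ := Fin.ext <| (isLastReturn_psum_glue j₁.isLt hu₁ hv₁.1).unique
        (hw ▸ isLastReturn_psum_glue j₂.isLt hu₂ hv₂.1)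
      have hu : u₁ = u₂ := by
        rw [← slice_glue_left u₁ v₁ (by omega), hw, slice_glue_left]
      have hv : v₁ = v₂ := by
        rw [← slice_glue_right u₁ v₁ (by omega), hw, slice_glue_right]
      subst hu hv
      rfl
    · rintro ⟨w, hw⟩
      obtain ⟨j, hj, hret⟩ := exists_isLastReturn hk hw
      exact ⟨⟨⟨j, hj⟩, ⟨_, hret.isPeaklessMotzkinTo_prefix hw hj⟩,
        ⟨_, hret.isPeaklessMotzkinTo_suffix hw hj⟩⟩,
        Subtype.ext (glue_slice hj (hret.step_eq_U hj))⟩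

theorem peakless_last_return_decomposition_general (k : ℕ) (hk : 1 ≤ k) (n : ℕ) :
    mTo n (k : ℤ) = ∑ j ∈ Finset.range n, m j * mTo (n - 1 - j) ((k : ℤ) - 1) := by
  rw [mTo, ← Nat.card_congr (lastReturnEquiv n (k := k) (by exact_mod_cast hk)), Nat.card_sigma,
    ← Fin.sum_univ_eq_sum_range]
  simp only [Nat.card_prod, m, mTo]

/-- Last-return decomposition: for `k ≥ 1` and `n ≥ 1`,
`m(n,k) = ∑_{j=0}^{n−1} m(j)·m(n−1−j, k−1)`. -/
theorem peakless_last_return_decomposition (k : ℕ) (hk : 1 ≤ k) (n : ℕ) (hn : 1 ≤ n) :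
    mTo n (k : ℤ) = ∑ j ∈ Finset.range n, m j * mTo (n - 1 - j) ((k : ℤ) - 1) :=
  peakless_last_return_decomposition_general k hk n
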